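/- Let a/b be a reduced fraction in the domain of the N-Farey map (|a|,|b| ≤ sqrt((N-1)/2), gcd(a,b)=1, gcd(b,N)=1), mapping to r mod N. Then (a,b) is, up to sign, the unique primitive vector (x,y) in the lattice Λ = ⟨(N,0),(r,1)⟩ with x²+y² < N whose second coordinate is coprime to N. -/

import Mathlib

/-!
Both `(a, b)` and `(x, y)` lie in `Λ`, so `N` divides their cross product `a y - b x`. By the
Lagrange identity `(a y - b x)² + (a x + b y)² = (a² + b²)(x² + y²)` and the size bounds, that
cross product has absolute value below `N`, hence vanishes. Two primitive parallel vectors agree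
up to a unit, i.e. up to sign.
-/

section CrossProduct

variable {R : Type*} [CommRing R]

theorem dvd_mul_sub_mul_of_dvd_sub_mul {N a b x y r : R}
    (hab : N ∣ a - b * r) (hxy : N ∣ x - y * r) : N ∣ a * y - b * x := by
  have key : a * y - b * x = y * (a - b * r) - b * (x - y * r) := by ring
  exact key ▸ dvd_sub (hab.mul_left y) (hxy.mul_left b)

-- Bezout: `e := s x + t y`, where `s a + t b = 1`.
theorem IsCoprime.exists_eq_mul_of_mul_eq_mul {a b x y : R} (hab : IsCoprime a b)
    (h : a * y = b * x) : ∃ e, x = e * a ∧ y = e * b := by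
  obtain ⟨s, t, hst⟩ := hab
  exact ⟨s * x + t * y, by linear_combination -t * h - x * hst,
    by linear_combination s * h - y * hst⟩

end CrossProduct

theorem sq_mul_sub_mul_le_mul {R : Type*} [CommRing R] [LinearOrder R] [IsStrictOrderedRing R]
    (a b x y : R) : (a * y - b * x) ^ 2 ≤ (a ^ 2 + b ^ 2) * (x ^ 2 + y ^ 2) := by
  nlinarith [sq_nonneg (a * x + b * y)]

theorem abs_mul_sub_mul_lt {R : Type*} [CommRing R] [LinearOrder R] [IsStrictOrderedRing R]
    {N a b x y : R} (hab : a ^ 2 + b ^ 2 < N) (hxy : x ^ 2 + y ^ 2 < N) :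
    |a * y - b * x| < N := by
  have hN : 0 ≤ N := (add_nonneg (sq_nonneg x) (sq_nonneg y)).trans hxy.le
  refine abs_lt_of_sq_lt_sq ?_ hN
  calc (a * y - b * x) ^ 2 ≤ (a ^ 2 + b ^ 2) * (x ^ 2 + y ^ 2) := sq_mul_sub_mul_le_mul a b x y
    _ < N * N := mul_lt_mul'' hab hxy (add_nonneg (sq_nonneg a) (sq_nonneg b))
        (add_nonneg (sq_nonneg x) (sq_nonneg y))
    _ = N ^ 2 := (sq N).symm

theorem Int.eq_or_eq_neg_of_mul_eq_mul {a b x y : ℤ} (hab : IsCoprime a b)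
    (hxy : IsCoprime x y) (h : a * y = b * x) : (x = a ∧ y = b) ∨ (x = -a ∧ y = -b) := by
  obtain ⟨e, rfl, rfl⟩ := hab.exists_eq_mul_of_mul_eq_mul h
  have he : IsUnit e := isCoprime_self.mp hxy.of_mul_left_left.of_mul_right_left
  rcases Int.isUnit_iff.mp he with rfl | rfl <;> simp

theorem farey_vector_unique_up_to_sign_general (N : ℤ) (r a b : ℤ)
    (hab : Int.gcd a b = 1)
    (ha : 2 * a ^ 2 ≤ N - 1) (hb : 2 * b ^ 2 ≤ N - 1)
    (hcong : N ∣ a - b * r) :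
    ((∃ u v : ℤ, a = u * N + v * r ∧ b = v) ∧ a ^ 2 + b ^ 2 < N) ∧
    (∀ x y : ℤ, (∃ u v : ℤ, x = u * N + v * r ∧ y = v) →
      Int.gcd x y = 1 → Int.gcd y N = 1 → x ^ 2 + y ^ 2 < N →
      (x = a ∧ y = b) ∨ (x = -a ∧ y = -b)) := by
  have hsize : a ^ 2 + b ^ 2 < N := by linarith
  refine ⟨⟨?_, hsize⟩, ?_⟩
  · obtain ⟨k, hk⟩ := hcong
    exact ⟨k, b, by linear_combination hk, rfl⟩
  rintro x y ⟨u, v, rfl, rfl⟩ hxy - hsize_xy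
  have hdvd : N ∣ a * y - b * (u * N + y * r) :=
    dvd_mul_sub_mul_of_dvd_sub_mul hcong ⟨u, by ring⟩
  have hcross : a * y - b * (u * N + y * r) = 0 :=
    Int.eq_zero_of_abs_lt_dvd hdvd (abs_mul_sub_mul_lt hsize hsize_xy)
  exact Int.eq_or_eq_neg_of_mul_eq_mul (Int.isCoprime_iff_gcd_eq_one.mpr hab)
    (Int.isCoprime_iff_gcd_eq_one.mpr hxy) (sub_eq_zero.mp hcross)

/-- Let `a/b` be a reduced fraction in the domain of the `N`-Farey map
(`2a² ≤ N-1`, `2b² ≤ N-1`, `gcd(a,b)=1`, `gcd(b,N)=1`), mapping to `r mod N`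
(i.e. `a ≡ b·r (mod N)`). Then `(a,b)` is, up to sign, the unique primitive
vector `(x,y)` of the lattice `Λ = ⟨(N,0),(r,1)⟩` with `x²+y² < N` whose second
coordinate is coprime to `N`. -/
theorem farey_vector_unique_up_to_sign (N : ℤ) (hN : 0 < N) (r a b : ℤ)
    (hab : Int.gcd a b = 1) (hbN : Int.gcd b N = 1)
    (ha : 2 * a ^ 2 ≤ N - 1) (hb : 2 * b ^ 2 ≤ N - 1)
    (hcong : N ∣ a - b * r) :
    ((∃ u v : ℤ, a = u * N + v * r ∧ b = v) ∧ a ^ 2 + b ^ 2 < N) ∧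
    (∀ x y : ℤ, (∃ u v : ℤ, x = u * N + v * r ∧ y = v) →
      Int.gcd x y = 1 → Int.gcd y N = 1 → x ^ 2 + y ^ 2 < N →
      (x = a ∧ y = b) ∨ (x = -a ∧ y = -b)) :=
  farey_vector_unique_up_to_sign_general N r a b hab ha hb hcong
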